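/- In the Hopcroft–Karp framework: if augmenting paths are found in phases where each phase augments along a maximal set of vertex-disjoint shortest augmenting paths, and shortest augmenting path length strictly increases between phases, then the total number of phases needed to reach a maximum matching of size κ is at most 2⌈√κ⌉ + 1. -/

import Mathlib

/-!
Let `s = ⌈√κ⌉₊` and compare the matching `M = M (s + 1)` with the maximum matching `M' = M T`.
From each vertex matched by `M'` but not by `M`, follow `M'`- and `M`-edges alternately until
stuck. Since both are matchings, such a run never revisits a vertex, and two runs meeting at
positions of equal parity coincide. Runs stuck at even length end in distinct vertices matched by
`M` only, so at least `2 (|M'| - |M|)` runs have odd length; these are `M`-augmenting paths,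
hence of length at least `2s + 3`, and their vertices at the odd positions `1, 3, …, 2s + 1` are
pairwise distinct vertices matched by `M`. Thus `(s + 1) (|M'| - |M|) ≤ |M| ≤ κ ≤ s²`. If
`T > 2s + 1`, each of the remaining `T - s - 1 ≥ s + 1` phases adds an edge, so
`|M'| - |M| ≥ s + 1`, a contradiction.
-/

/-- An augmenting path with respect to a matching `M`. -/
def SimpleGraph.Subgraph.IsAugPath {V : Type*} {G : SimpleGraph V} (M : G.Subgraph)
    {u v : V} (p : G.Walk u v) : Prop :=
  p.IsPath ∧ u ∉ M.support ∧ v ∉ M.support ∧ Odd p.length ∧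
    List.Chain' (fun a b => (a ∈ M.edgeSet) ≠ (b ∈ M.edgeSet)) p.edges

namespace SimpleGraph

variable {V : Type*} {G : SimpleGraph V}

theorem exists_walk_support_eq_map_range (f : ℕ → V) (n : ℕ)
    (hf : ∀ s < n, G.Adj (f s) (f (s + 1))) :
    ∃ p : G.Walk (f 0) (f n), p.length = n ∧ p.support = (List.range (n + 1)).map f ∧
      p.edges = (List.range n).map fun s => s(f s, f (s + 1)) := by
  induction n generalizing f with
  | zero => exact ⟨.nil, by simp [List.range_succ]⟩
  | succ n ih =>
    obtain ⟨q, hlen, hsupp, hedges⟩ := ih (fun s => f (s + 1)) fun s hs => hf (s + 1) (by omega)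
    refine ⟨.cons (hf 0 n.succ_pos) q, by simp [hlen], ?_, ?_⟩
    · rw [Walk.support_cons, hsupp, List.range_succ_eq_map (n := n + 1), List.map_cons,
        List.map_map]
      rfl
    · rw [Walk.edges_cons, hedges, List.range_succ_eq_map (n := n), List.map_cons, List.map_map]
      rfl

namespace Subgraph

variable {M M' N : G.Subgraph}

theorem IsMatching.ncard_support [Finite V] (hM : M.IsMatching) :
    M.support.ncard = 2 * M.edgeSet.ncard := by
  classical
  have := Fintype.ofFinite V
  have hcoe : M.coe.edgeSet.ncard = M.edgeSet.ncard := by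
    rw [← image_coe_edgeSet_coe,
      Set.ncard_image_of_injective _ (Sym2.map.injective Subtype.coe_injective)]
  rw [hM.support_eq_verts, ← hcoe, ← Nat.card_coe_set_eq, ← Nat.card_coe_set_eq,
    Nat.card_eq_fintype_card, Nat.card_eq_fintype_card, ← edgeFinset_card,
    ← M.coe.sum_degrees_eq_twice_card_edges, Fintype.card_eq_sum_ones]
  refine Finset.sum_congr rfl fun v _ => ?_
  rw [coe_degree]
  convert ((isMatching_iff_forall_degree.1 hM) v v.2).symm

def stepSubgraph (M M' : G.Subgraph) (n : ℕ) : G.Subgraph := if n % 2 = 0 then M' else M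

theorem stepSubgraph_of_mod_two_eq_zero {n : ℕ} (h : n % 2 = 0) : stepSubgraph M M' n = M' :=
  if_pos h

theorem stepSubgraph_of_mod_two_eq_one {n : ℕ} (h : n % 2 = 1) : stepSubgraph M M' n = M :=
  if_neg (by omega)

theorem stepSubgraph_congr {k m : ℕ} (h : k % 2 = m % 2) :
    stepSubgraph M M' k = stepSubgraph M M' m := by
  simp only [stepSubgraph, h]

theorem IsMatching.stepSubgraph (hM : M.IsMatching) (hM' : M'.IsMatching) (n : ℕ) :
    (stepSubgraph M M' n).IsMatching := by
  unfold Subgraph.stepSubgraph; split_ifs <;> assumption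

/-- Started at an `M`-free vertex, `f 0, …, f n` has the shape of an `M`-augmenting path inside
`M ∆ M'`: it enters each `M`-matched vertex by an edge of `M'` and leaves it by one of `M`. -/
def IsAltSeq (M M' : G.Subgraph) (f : ℕ → V) (n : ℕ) : Prop :=
  ∀ s < n, (stepSubgraph M M' s).Adj (f s) (f (s + 1))

namespace IsAltSeq

variable {f g : ℕ → V} {k m n : ℕ}

theorem mono (hf : IsAltSeq M M' f n) (hmn : m ≤ n) : IsAltSeq M M' f m :=
  fun s hs => hf s (by omega)

theorem adj (hf : IsAltSeq M M' f n) {s : ℕ} (hs : s < n) : G.Adj (f s) (f (s + 1)) :=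
  (hf s hs).adj_sub

theorem adj_of_mod_two_eq_one (hf : IsAltSeq M M' f n) {s : ℕ} (hs : s < n) (ho : s % 2 = 1) :
    M.Adj (f s) (f (s + 1)) := by
  simpa only [stepSubgraph_of_mod_two_eq_one ho] using hf s hs

theorem succ_mem_support (hf : IsAltSeq M M' f (n + 1)) :
    f (n + 1) ∈ (stepSubgraph M M' n).support :=
  (stepSubgraph M M' n).mem_support.2 ⟨_, (hf n n.lt_succ_self).symm⟩

theorem apply_eq_of_succ (hM : M.IsMatching) (hM' : M'.IsMatching) (hf : IsAltSeq M M' f (k + 1))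
    (hg : IsAltSeq M M' g (m + 1)) (hpar : k % 2 = m % 2) (he : f (k + 1) = g (m + 1)) :
    f k = g m := by
  have hgm := hg m m.lt_succ_self
  rw [← stepSubgraph_congr hpar, ← he] at hgm
  exact (hM.stepSubgraph hM' k).eq_of_adj_right (hf k k.lt_succ_self) hgm

theorem eq_of_apply_eq (hM : M.IsMatching) (hM' : M'.IsMatching) (hf : IsAltSeq M M' f k)
    (hg : IsAltSeq M M' g m) (hf₀ : f 0 ∉ M.support) (hg₀ : g 0 ∉ M.support)
    (hpar : k % 2 = m % 2) (he : f k = g m) : k = m ∧ f 0 = g 0 := by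
  induction k generalizing m with
  | zero =>
    obtain _ | m := m
    · exact ⟨rfl, he⟩
    · have := hg.succ_mem_support
      rw [stepSubgraph_of_mod_two_eq_one (by omega), ← he] at this
      exact absurd this hf₀
  | succ k ih =>
    obtain _ | m := m
    · have := hf.succ_mem_support
      rw [stepSubgraph_of_mod_two_eq_one (by omega), he] at this
      exact absurd this hg₀
    · have := ih (hf.mono k.le_succ) (hg.mono m.le_succ) (by omega)
        (apply_eq_of_succ hM hM' hf hg (by omega) he)
      exact ⟨by omega, this.2⟩

theorem apply_ne_of_mod_two_ne (hM : M.IsMatching) (hM' : M'.IsMatching)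
    (hf : IsAltSeq M M' f m) (hkm : k < m) (hpar : k % 2 ≠ m % 2) : f k ≠ f m := by
  induction m using Nat.strong_induction_on generalizing k with
  | _ m ih =>
  intro he
  obtain rfl | hkm' := eq_or_lt_of_le (Nat.succ_le_of_lt hkm)
  · exact (hf.adj k.lt_succ_self).ne he
  obtain ⟨m, rfl⟩ : ∃ m', m = m' + 1 := ⟨m - 1, by omega⟩
  -- `f (k + 1)` and `f m` are both partners of `f k = f (m + 1)` in the same matching
  have hsucc : f (k + 1) = f m := by
    have hm := (hf m m.lt_succ_self).symm
    rw [← stepSubgraph_congr (show k % 2 = m % 2 by omega), ← he] at hm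
    exact (hM.stepSubgraph hM' k).eq_of_adj_left (hf k hkm) hm
  exact ih m m.lt_succ_self (hf.mono m.le_succ) (by omega) (by omega) hsucc

theorem injOn (hM : M.IsMatching) (hM' : M'.IsMatching) (hf : IsAltSeq M M' f n)
    (hf₀ : f 0 ∉ M.support) : Set.InjOn f (Set.Iic n) := by
  intro k hk m hm he
  simp only [Set.mem_Iic] at hk hm
  by_cases hpar : k % 2 = m % 2
  · exact (eq_of_apply_eq hM hM' (hf.mono hk) (hf.mono hm) hf₀ hf₀ hpar he).1
  · rcases lt_or_gt_of_ne (show k ≠ m by omega) with hkm | hmk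
    · exact absurd he (apply_ne_of_mod_two_ne hM hM' (hf.mono hm) hkm hpar)
    · exact absurd he.symm (apply_ne_of_mod_two_ne hM hM' (hf.mono hk) hmk (Ne.symm hpar))

theorem mk_mem_edgeSet_iff (hM : M.IsMatching) (hM' : M'.IsMatching) (hf : IsAltSeq M M' f n)
    (hf₀ : f 0 ∉ M.support) {s : ℕ} (hs : s < n) :
    s(f s, f (s + 1)) ∈ M.edgeSet ↔ s % 2 = 1 := by
  refine ⟨fun hmem => ?_, fun ho => hf.adj_of_mod_two_eq_one hs ho⟩
  by_contra hev
  obtain _ | s := s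
  · exact hf₀ (M.mem_support.2 ⟨_, hmem⟩)
  -- otherwise `f (s + 1)` has both `f s` and `f (s + 2)` as partners in `M`
  have hprev := (hf.adj_of_mod_two_eq_one (by omega : s < n) (by omega)).symm
  have := hf.injOn hM hM' hf₀ (Set.mem_Iic.2 (by omega)) (Set.mem_Iic.2 (by omega))
    (hM.eq_of_adj_left hprev hmem)
  omega

theorem exists_isAugPath (hM : M.IsMatching) (hM' : M'.IsMatching) (hf : IsAltSeq M M' f n)
    (hn : n % 2 = 1) (hf₀ : f 0 ∉ M.support) (hfn : f n ∉ M.support) :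
    ∃ p : G.Walk (f 0) (f n), M.IsAugPath p ∧ p.length = n := by
  obtain ⟨p, hlen, hsupp, hedges⟩ := exists_walk_support_eq_map_range f n fun s hs => hf.adj hs
  refine ⟨p, ⟨?_, hf₀, hfn, ⟨n / 2, by omega⟩, ?_⟩, hlen⟩
  · rw [Walk.isPath_def, hsupp]
    refine List.Nodup.map_on (fun k hk m hm he => hf.injOn hM hM' hf₀ ?_ ?_ he) List.nodup_range
    · simpa [Nat.lt_succ_iff] using hk
    · simpa [Nat.lt_succ_iff] using hm
  · obtain ⟨n, rfl⟩ : ∃ n', n = n' + 1 := ⟨n - 1, by omega⟩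
    show List.IsChain _ _
    rw [hedges, List.isChain_map, List.isChain_range_succ]
    intro s hs
    rw [ne_eq, eq_iff_iff, hf.mk_mem_edgeSet_iff hM hM' hf₀ (by omega),
      hf.mk_mem_edgeSet_iff hM hM' hf₀ (by omega)]
    omega

end IsAltSeq

open Classical in
noncomputable def partner (N : G.Subgraph) (v : V) : V :=
  if h : ∃ w, N.Adj v w then h.choose else v

theorem adj_partner {v : V} (hv : v ∈ N.support) : N.Adj v (N.partner v) := by
  have h : ∃ w, N.Adj v w := hv
  simpa only [partner, dif_pos h] using h.choose_spec

noncomputable def altSeq (M M' : G.Subgraph) (u : V) : ℕ → V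
  | 0 => u
  | n + 1 => (stepSubgraph M M' n).partner (altSeq M M' u n)

@[simp] theorem altSeq_zero {u : V} : altSeq M M' u 0 = u := rfl

/-- The first step at which `altSeq` gets stuck (junk value `0` if it never does, which cannot
happen from an `M`-free vertex in a finite graph). -/
noncomputable def runLength (M M' : G.Subgraph) (u : V) : ℕ :=
  sInf {n | altSeq M M' u n ∉ (stepSubgraph M M' n).support}

variable {u : V}

theorem isAltSeq_altSeq_runLength : IsAltSeq M M' (altSeq M M' u) (runLength M M' u) := by
  intro s hs
  have := Nat.notMem_of_lt_sInf hs
  simp only [Set.mem_ofPred_eq, not_not] at this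
  exact adj_partner this

theorem altSeq_runLength_notMem_support [Finite V] (hM : M.IsMatching) (hM' : M'.IsMatching)
    (hu : u ∉ M.support) :
    altSeq M M' u (runLength M M' u) ∉ (stepSubgraph M M' (runLength M M' u)).support := by
  refine Nat.sInf_mem
    (s := {n | altSeq M M' u n ∉ (stepSubgraph M M' n).support}) ?_
  by_contra! hstuck
  have hf : ∀ n, IsAltSeq M M' (altSeq M M' u) n := fun n s _ => by
    have := Set.notMem_empty s
    rw [← hstuck, Set.mem_ofPred_eq, not_not] at this
    exact adj_partner this
  refine not_injective_infinite_finite (altSeq M M' u) fun k m he => ?_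
  exact (hf (max k m)).injOn hM hM' hu (by simp) (by simp) he

theorem ncard_sdiff_odd_runLength_le [Finite V] (hM : M.IsMatching) (hM' : M'.IsMatching) :
    ((M'.support \ M.support) \ {u | runLength M M' u % 2 = 1}).ncard ≤
      (M.support \ M'.support).ncard := by
  refine Set.ncard_le_ncard_of_injOn (fun u => altSeq M M' u (runLength M M' u)) ?_ ?_
  · rintro u ⟨⟨hu', hu⟩, hodd⟩
    simp only [Set.mem_ofPred_eq] at hodd
    have hstuck := altSeq_runLength_notMem_support hM hM' hu
    rw [stepSubgraph_of_mod_two_eq_zero (by omega)] at hstuck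
    obtain ⟨L, hL⟩ : ∃ L, runLength M M' u = L + 1 := by
      refine Nat.exists_eq_succ_of_ne_zero fun h0 => ?_
      rw [h0, altSeq_zero] at hstuck
      exact hstuck hu'
    have hmem := (isAltSeq_altSeq_runLength (u := u)).mono hL.ge |>.succ_mem_support
    rw [stepSubgraph_of_mod_two_eq_one (by omega), ← hL] at hmem
    exact ⟨hmem, hstuck⟩
  · rintro u ⟨⟨-, hu⟩, hodd⟩ u' ⟨⟨-, hu'⟩, hodd'⟩ he
    simp only [Set.mem_ofPred_eq] at hodd hodd'
    exact (isAltSeq_altSeq_runLength.eq_of_apply_eq hM hM' isAltSeq_altSeq_runLength hu hu'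
      (by omega) he).2

theorem ncard_inter_odd_runLength_mul_le [Finite V] (hM : M.IsMatching) (hM' : M'.IsMatching)
    {i : ℕ} (hlen : ∀ (u v : V) (p : G.Walk u v), M.IsAugPath p → 2 * i + 1 ≤ p.length) :
    ((M'.support \ M.support) ∩ {u | runLength M M' u % 2 = 1}).ncard * i ≤ M.support.ncard := by
  have hlong : ∀ u ∈ (M'.support \ M.support) ∩ {u | runLength M M' u % 2 = 1},
      2 * i + 1 ≤ runLength M M' u := by
    rintro u ⟨⟨-, hu⟩, hodd⟩
    have hstuck := altSeq_runLength_notMem_support hM hM' hu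
    rw [stepSubgraph_of_mod_two_eq_one hodd] at hstuck
    obtain ⟨p, hp, hpl⟩ := isAltSeq_altSeq_runLength.exists_isAugPath hM hM' hodd hu hstuck
    exact hpl ▸ hlen _ _ p hp
  rw [← Set.ncard_Iio_nat i, ← Set.ncard_prod]
  refine Set.ncard_le_ncard_of_injOn (fun x => altSeq M M' x.1 (2 * x.2 + 1)) ?_ ?_
  · rintro ⟨u, k⟩ ⟨hu, hk⟩
    have := hlong u hu
    simp only [Set.mem_Iio] at hk
    dsimp only
    exact M.mem_support.2
      ⟨_, isAltSeq_altSeq_runLength.adj_of_mod_two_eq_one (by omega) (by omega)⟩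
  · rintro ⟨u, k⟩ ⟨hu, hk⟩ ⟨u', k'⟩ ⟨hu', hk'⟩ he
    have := hlong u hu
    have := hlong u' hu'
    simp only [Set.mem_Iio] at hk hk'
    obtain ⟨hkk', huu'⟩ := IsAltSeq.eq_of_apply_eq hM hM'
      ((isAltSeq_altSeq_runLength (u := u)).mono (by omega : 2 * k + 1 ≤ _))
      ((isAltSeq_altSeq_runLength (u := u')).mono (by omega : 2 * k' + 1 ≤ _)) hu.1.2 hu'.1.2
      (by omega) he
    exact Prod.ext huu' (by simpa using hkk')

theorem mul_sub_ncard_edgeSet_le [Finite V] (hM : M.IsMatching) (hM' : M'.IsMatching) {i : ℕ}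
    (hlen : ∀ (u v : V) (p : G.Walk u v), M.IsAugPath p → 2 * i + 1 ≤ p.length) :
    i * (M'.edgeSet.ncard - M.edgeSet.ncard) ≤ M.edgeSet.ncard := by
  have hsplit := Set.ncard_inter_add_ncard_sdiff_eq_ncard (M'.support \ M.support)
    {u | runLength M M' u % 2 = 1}
  have hsupp : (M'.support \ M.support).ncard + M.support.ncard =
      (M.support \ M'.support).ncard + M'.support.ncard := by
    rw [Set.ncard_sdiff_add_ncard, Set.ncard_sdiff_add_ncard, Set.union_comm]
  have hbad := ncard_sdiff_odd_runLength_le hM hM'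
  have hgood := ncard_inter_odd_runLength_mul_le hM hM' hlen
  rw [hM.ncard_support] at hsupp hgood
  rw [hM'.ncard_support] at hsupp
  have hgood_ge : 2 * (M'.edgeSet.ncard - M.edgeSet.ncard) ≤
      ((M'.support \ M.support) ∩ {u | runLength M M' u % 2 = 1}).ncard := by omega
  nlinarith [Nat.mul_le_mul_right i hgood_ge]

end Subgraph

end SimpleGraph

open SimpleGraph

theorem add_sub_le_of_forall_lt_succ {f : ℕ → ℕ} {i T : ℕ} (hf : ∀ j < T, f j < f (j + 1))
    (hi : i ≤ T) : f i + (T - i) ≤ f T := by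
  induction T with
  | zero => simp_all
  | succ T ih =>
    obtain rfl | hi := eq_or_lt_of_le hi
    · simp
    · have := ih (fun j hj => hf j (by omega)) (by omega)
      have := hf T T.lt_succ_self
      omega

theorem stmt_9_general {V : Type*} [Fintype V] (G : SimpleGraph V)
    (κ T : ℕ) (M : ℕ → G.Subgraph)
    (hmatch : ∀ i ≤ T, (M i).IsMatching)
    (hmono : ∀ i < T, (M i).edgeSet.ncard < (M (i + 1)).edgeSet.ncard)
    (hlen : ∀ i ≤ T, ∀ (u v : V) (p : G.Walk u v), (M i).IsAugPath p → 2 * i + 1 ≤ p.length)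
    (hub : ∀ N : G.Subgraph, N.IsMatching → N.edgeSet.ncard ≤ κ)
    (hfinal : (M T).edgeSet.ncard = κ) :
    T ≤ 2 * ⌈Real.sqrt κ⌉₊ + 1 := by
  set s := ⌈Real.sqrt κ⌉₊
  by_contra! hT
  have hκ : κ ≤ s * s := by
    have := (Real.sqrt_le_iff.1 (Nat.le_ceil (Real.sqrt κ))).2
    exact_mod_cast this.trans_eq (sq _)
  have hgrowth := add_sub_le_of_forall_lt_succ (f := fun i => (M i).edgeSet.ncard) hmono
    (show s + 1 ≤ T by omega)
  have hcount := Subgraph.mul_sub_ncard_edgeSet_le (hmatch (s + 1) (by omega))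
    (hmatch T le_rfl) (hlen (s + 1) (by omega))
  have hbound := hub _ (hmatch (s + 1) (by omega))
  have hgap : s + 1 ≤ (M T).edgeSet.ncard - (M (s + 1)).edgeSet.ncard := by omega
  nlinarith [Nat.mul_le_mul_left (s + 1) hgap]

/-- Hopcroft–Karp phase bound: if a sequence of matchings `M 0, …, M T` has strictly
increasing sizes, the shortest augmenting path length after phase `i` is at least `2i + 1`,
and `M T` is a maximum matching of size `κ`, then `T ≤ 2⌈√κ⌉ + 1`. -/
theorem stmt_9 {V : Type*} [Fintype V] (G : SimpleGraph V) (c : V → Bool)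
    (hbip : ∀ u v, G.Adj u v → c u ≠ c v)
    (κ T : ℕ) (M : ℕ → G.Subgraph)
    (hmatch : ∀ i ≤ T, (M i).IsMatching)
    (hmono : ∀ i < T, (M i).edgeSet.ncard < (M (i + 1)).edgeSet.ncard)
    (hlen : ∀ i ≤ T, ∀ (u v : V) (p : G.Walk u v), (M i).IsAugPath p → 2 * i + 1 ≤ p.length)
    (hub : ∀ N : G.Subgraph, N.IsMatching → N.edgeSet.ncard ≤ κ)
    (hfinal : (M T).edgeSet.ncard = κ) :
    T ≤ 2 * ⌈Real.sqrt κ⌉₊ + 1 :=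
  stmt_9_general G κ T M hmatch hmono hlen hub hfinal
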